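/- If suf(j1) is an L-suffix not the largest L-suffix starting with its first character t, suf(j2) belongs to the set of largest-L-or-smallest-LMS suffixes starting with t, and suf(j3) is an LMS-suffix starting with t that is not the smallest, then suf(j1) < suf(j2) < suf(j3). -/

import Mathlib

variable {α : Type*}

/-- The suffix of `T` starting at (1-based) position `i`. -/
def Suf (T : List α) (i : ℕ) : List α := T.drop (i - 1)

/-- The (1-based) `i`-th character of `T`, i.e. the first character of `Suf T i`. -/
def Chr [Inhabited α] (T : List α) (i : ℕ) : α := (Suf T i).headI

/-- `Suf T i` is lexicographically smaller than `Suf T j`. -/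
def SufLt [LT α] (T : List α) (i j : ℕ) : Prop := List.Lex (· < ·) (Suf T i) (Suf T j)

/-- `Suf T i` is an S-suffix (position in range, and `i = N` or `suf i < suf (i+1)`). -/
def IsS [LinearOrder α] (T : List α) (i : ℕ) : Prop :=
  1 ≤ i ∧ i ≤ T.length ∧ (i = T.length ∨ SufLt T i (i + 1))

/-- `Suf T i` is an L-suffix (position in range and not an S-suffix). -/
def IsL [LinearOrder α] (T : List α) (i : ℕ) : Prop :=
  1 ≤ i ∧ i ≤ T.length ∧ ¬ (i = T.length ∨ SufLt T i (i + 1))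

/-- `Suf T i` is an LMS-suffix: an S-suffix whose preceding suffix is an L-suffix. -/
def IsLMS [LinearOrder α] (T : List α) (i : ℕ) : Prop :=
  1 < i ∧ IsS T i ∧ IsL T (i - 1)

/-- The last character of `T` is strictly smaller than every other character of `T`. -/
def LastSmallest [Inhabited α] [LinearOrder α] (T : List α) : Prop :=
  ∀ i, 1 ≤ i → i < T.length → Chr T T.length < Chr T i

/-!
An L-suffix is smaller than every S-suffix with the same first character `c`. Write both as
`c :: Suf (i+1)` and `c :: Suf (j+1)`. Being L forces `Chr (i+1) ≤ c` and being S forces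
`c ≤ Chr (j+1)`; if either inequality is strict we are done, otherwise `i+1` is again L (it is
not the last position, whose character is smaller than `c`) and `j+1` again S, and we recurse.
With this, `Lx(t)` lies above the other L-suffixes by maximality and below every LMS-suffix with
first character `t`; the alternative `LMSx(t)` for `suf j2` cannot occur, as `suf j1` is an
L-suffix with first character `t`.
-/

section Suffixes

variable {T : List α} {i j : ℕ}

lemma suf_succ_ne (hi : 1 ≤ i) (hiT : i ≤ T.length) : Suf T (i + 1) ≠ Suf T i := by
  intro h
  have := congrArg List.length h
  simp only [Suf, List.length_drop, Nat.add_sub_cancel] at this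
  omega

lemma suf_eq_cons [Inhabited α] (hi : 1 ≤ i) (hiT : i ≤ T.length) :
    Suf T i = Chr T i :: Suf T (i + 1) := by
  have hcons := List.drop_eq_getElem_cons (l := T) (i := i - 1) (by omega)
  rw [show i - 1 + 1 = i by omega] at hcons
  simp only [Chr, Suf, Nat.add_sub_cancel, hcons, List.headI_cons]

variable [LinearOrder α]

lemma IsL.lt_length (hi : IsL T i) : i < T.length := by
  obtain ⟨-, hiT, hnotS⟩ := hi
  omega

lemma IsL.sufLt_succ (hi : IsL T i) : SufLt T (i + 1) i := by
  obtain ⟨hi1, hiT, hnotS⟩ := hi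
  push Not at hnotS
  exact (lt_or_gt_of_ne (suf_succ_ne hi1 hiT)).resolve_right hnotS.2

lemma IsS.sufLt_succ (hj : IsS T j) (hjT : j < T.length) : SufLt T j (j + 1) :=
  hj.2.2.resolve_left hjT.ne

variable [Inhabited α]

lemma sufLt_succ_iff (hi : 1 ≤ i) (hiT : i < T.length) :
    SufLt T i (i + 1) ↔
      Chr T i < Chr T (i + 1) ∨ Chr T i = Chr T (i + 1) ∧ SufLt T (i + 1) (i + 2) := by
  rw [SufLt, suf_eq_cons hi hiT.le, suf_eq_cons (i := i + 1) (by omega) hiT,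
    List.cons_lex_cons_iff, ← suf_eq_cons (by omega) hiT, SufLt]

lemma sufLt_succ_left_iff (hi : 1 ≤ i) (hiT : i < T.length) :
    SufLt T (i + 1) i ↔
      Chr T (i + 1) < Chr T i ∨ Chr T (i + 1) = Chr T i ∧ SufLt T (i + 2) (i + 1) := by
  rw [SufLt, suf_eq_cons hi hiT.le, suf_eq_cons (i := i + 1) (by omega) hiT,
    List.cons_lex_cons_iff, ← suf_eq_cons (by omega) hiT, SufLt]

lemma IsL.chr_succ_le (hi : IsL T i) : Chr T (i + 1) ≤ Chr T i := by
  rcases (sufLt_succ_left_iff hi.1 hi.lt_length).1 hi.sufLt_succ with hlt | ⟨heq, -⟩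
  exacts [hlt.le, heq.le]

lemma IsS.chr_le_succ (hj : IsS T j) (hjT : j < T.length) : Chr T j ≤ Chr T (j + 1) := by
  rcases (sufLt_succ_iff hj.1 hjT).1 (hj.sufLt_succ hjT) with hlt | ⟨heq, -⟩
  exacts [hlt.le, heq.le]

lemma IsL.succ (hT : LastSmallest T) (hi : IsL T i) (hc : Chr T (i + 1) = Chr T i) :
    IsL T (i + 1) := by
  have hiT := hi.lt_length
  have hiN : i + 1 ≠ T.length := fun h ↦ (hT i hi.1 hiT).ne (h ▸ hc)
  obtain hlt | ⟨-, hS⟩ := (sufLt_succ_left_iff hi.1 hiT).1 hi.sufLt_succ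
  · exact absurd hc hlt.ne
  exact ⟨by omega, hiT, not_or.2 ⟨hiN, lt_asymm (α := List α) hS⟩⟩

lemma IsS.succ (hj : IsS T j) (hjT : j < T.length) (hc : Chr T j = Chr T (j + 1)) :
    IsS T (j + 1) := by
  obtain hlt | ⟨-, hS⟩ := (sufLt_succ_iff hj.1 hjT).1 (hj.sufLt_succ hjT)
  · exact absurd hc hlt.ne
  exact ⟨by omega, hjT, Or.inr hS⟩

lemma IsS.lt_length_of_chr_eq (hT : LastSmallest T) (hi : IsL T i) (hj : IsS T j)
    (hc : Chr T i = Chr T j) : j < T.length := by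
  obtain ⟨-, hjT, -⟩ := hj
  refine lt_of_le_of_ne hjT fun hjN ↦ ?_
  exact (hT i hi.1 hi.lt_length).ne (hjN ▸ hc.symm)

theorem IsL.sufLt_of_isS {i j : ℕ} (hT : LastSmallest T) (hi : IsL T i) (hj : IsS T j)
    (hc : Chr T i = Chr T j) : SufLt T i j := by
  have hiT := hi.lt_length
  have hjT := hj.lt_length_of_chr_eq hT hi hc
  rw [SufLt, suf_eq_cons hi.1 hiT.le, suf_eq_cons hj.1 hjT.le, hc, List.lex_cons_iff]
  by_cases hlt : Chr T (i + 1) < Chr T (j + 1)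
  · rw [suf_eq_cons (i := i + 1) (by omega) hiT, suf_eq_cons (i := j + 1) (by omega) hjT]
    exact .rel hlt
  obtain ⟨hci, hcj⟩ : Chr T (i + 1) = Chr T i ∧ Chr T j = Chr T (j + 1) := by
    have := hi.chr_succ_le
    have := hj.chr_le_succ hjT
    constructor <;> order
  exact IsL.sufLt_of_isS hT (hi.succ hT hci) (hj.succ hjT hcj) (hci.trans (hc.trans hcj))
termination_by T.length - i
decreasing_by omega

end Suffixes

/-- If `suf j1` is an L-suffix with first character `t` that is not the largest such,
`suf j2` is the largest L-suffix with first character `t` (or, if none exists, the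
smallest LMS-suffix with first character `t`), and `suf j3` is an LMS-suffix with
first character `t` that is not the smallest such, then `suf j1 < suf j2 < suf j3`. -/
theorem stmt13 [Inhabited α] [LinearOrder α] (T : List α) (hlast : LastSmallest T)
    (j1 j2 j3 : ℕ) (t : α)
    (h1 : IsL T j1 ∧ Chr T j1 = t ∧
          ∃ k, IsL T k ∧ Chr T k = t ∧ SufLt T j1 k)
    (h2 : (IsL T j2 ∧ Chr T j2 = t ∧
            ∀ k, IsL T k → Chr T k = t → Suf T k = Suf T j2 ∨ SufLt T k j2) ∨
          ((¬ ∃ k, IsL T k ∧ Chr T k = t) ∧ IsLMS T j2 ∧ Chr T j2 = t ∧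
            ∀ k, IsLMS T k → Chr T k = t → Suf T k = Suf T j2 ∨ SufLt T j2 k))
    (h3 : IsLMS T j3 ∧ Chr T j3 = t ∧
          ∃ k, IsLMS T k ∧ Chr T k = t ∧ SufLt T k j3) :
    SufLt T j1 j2 ∧ SufLt T j2 j3 := by
  obtain ⟨hL1, hc1, k, hLk, hck, hj1k⟩ := h1
  obtain ⟨⟨-, hS3, -⟩, hc3, -⟩ := h3
  obtain ⟨hL2, hc2, hmax⟩ | ⟨hnoL, -⟩ := h2
  · refine ⟨?_, hL2.sufLt_of_isS hlast hS3 (hc2.trans hc3.symm)⟩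
    obtain heq | hkj2 := hmax k hLk hck
    · rwa [SufLt, ← heq]
    · exact lt_trans (α := List α) hj1k hkj2
  · exact absurd ⟨j1, hL1, hc1⟩ hnoL
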